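/- Sign transfer from the smoothed function to the exact function: for every λ > 0 and t ∈ ℝ, if F_λ(t) < 0 then F(t) < 0, and if F_λ(t) > 1/(4λ) then F(t) > 0. -/

import Mathlib

open scoped BigOperators

/-- `f_k(Ω) = −(1/α)·|∑_n h_n e^{iΩ_n}|²`. -/
noncomputable def fObj {N : ℕ} (α : ℝ) (h : Fin N → ℂ) (Ω : Fin N → ℝ) : ℝ :=
  -(1 / α) * ‖∑ n, h n * Complex.exp (Complex.I * (Ω n : ℂ))‖ ^ 2

/-- `g_q(Ω) = |∑_n c_n e^{iΩ_n}|²`. -/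
noncomputable def gObj {N : ℕ} (c : Fin N → ℂ) (Ω : Fin N → ℝ) : ℝ :=
  ‖∑ n, c n * Complex.exp (Complex.I * (Ω n : ℂ))‖ ^ 2

/-- The unit simplex in Euclidean space `ℝ^m`. -/
def unitSimplex (m : ℕ) : Set (EuclideanSpace ℝ (Fin m)) :=
  {x | (∀ i, 0 ≤ x i) ∧ ∑ i, x i = 1}

/-- The compensated-convexity upper transform of the maximum function:
`C_λ(y) = λ‖y‖² − dist(2λy, Δ)²/(4λ) + 1/(4λ)`. -/
noncomputable def Cupper {m : ℕ} (lam : ℝ) (y : EuclideanSpace ℝ (Fin m)) : ℝ :=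
  lam * ‖y‖ ^ 2 - (Metric.infDist ((2 * lam) • y) (unitSimplex m)) ^ 2 / (4 * lam) + 1 / (4 * lam)

/-- `h(Ω,t) = (f_1(Ω)−t,…,f_K(Ω)−t, g_1(Ω)−σ_1,…,g_Q(Ω)−σ_Q) ∈ ℝ^{K+Q}`. -/
noncomputable def hVec {N K Q : ℕ} (h : Fin K → Fin N → ℂ) (α : Fin K → ℝ)
    (c : Fin Q → Fin N → ℂ) (σ : Fin Q → ℝ) (Ω : Fin N → ℝ) (t : ℝ) :
    EuclideanSpace ℝ (Fin (K + Q)) :=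
  WithLp.toLp 2 (fun i => Fin.addCases (fun k => fObj (α k) (h k) Ω - t) (fun q => gObj (c q) Ω - σ q) i)

/-- `F(t) = inf_Ω max( max_k (f_k(Ω) − t), max_q (g_q(Ω) − σ_q) )`. -/
noncomputable def Ffun {N K Q : ℕ} (h : Fin K → Fin N → ℂ) (α : Fin K → ℝ)
    (c : Fin Q → Fin N → ℂ) (σ : Fin Q → ℝ) (t : ℝ) : ℝ :=
  ⨅ Ω : Fin N → ℝ, max (⨆ k, (fObj (α k) (h k) Ω - t)) (⨆ q, (gObj (c q) Ω - σ q))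

/-- `F_λ(t) = inf_Ω C_λ(h(Ω,t))`. -/
noncomputable def Flam {N K Q : ℕ} (h : Fin K → Fin N → ℂ) (α : Fin K → ℝ)
    (c : Fin Q → Fin N → ℂ) (σ : Fin Q → ℝ) (lam t : ℝ) : ℝ :=
  ⨅ Ω : Fin N → ℝ, Cupper lam (hVec h α c σ Ω t)

/-!
For `x` in the simplex Δ, `λ‖y‖² − ‖2λy − x‖²/(4λ) = ⟪y, x⟫ − ‖x‖²/(4λ)`, so
`C_λ(y) = sup_{x ∈ Δ} (⟪y, x⟫ − ‖x‖²/(4λ)) + 1/(4λ)`. Testing with a vertex `x = e_j`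
gives `y_j ≤ C_λ(y)`, while `⟪y, x⟫ ≤ max y` and `‖x‖² ≥ 0` give
`C_λ(y) ≤ max y + 1/(4λ)`. Taking infima over `Ω` of `max y ≤ C_λ(y) ≤ max y + 1/(4λ)`
yields `F(t) ≤ F_λ(t) ≤ F(t) + 1/(4λ)`, which is the sign transfer.
-/

section Simplex

variable {m : ℕ}

lemma single_one_mem_unitSimplex (j : Fin m) :
    EuclideanSpace.single j (1 : ℝ) ∈ unitSimplex m := by
  refine ⟨fun i => ?_, ?_⟩
  · rw [PiLp.single_apply]
    split_ifs <;> norm_num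
  · simp

lemma unitSimplex_nonempty [Nonempty (Fin m)] : (unitSimplex m).Nonempty :=
  ⟨_, single_one_mem_unitSimplex (Classical.arbitrary _)⟩

lemma inner_le_of_mem_unitSimplex {y x : EuclideanSpace ℝ (Fin m)} {M : ℝ}
    (hy : ∀ i, y i ≤ M) (hx : x ∈ unitSimplex m) : inner ℝ y x ≤ M :=
  calc inner ℝ y x = ∑ i, x i * y i := by simp [PiLp.inner_apply]
    _ ≤ ∑ i, x i * M := Finset.sum_le_sum fun i _ => mul_le_mul_of_nonneg_left (hy i) (hx.1 i)
    _ = M := by rw [← Finset.sum_mul, hx.2, one_mul]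

end Simplex

lemma le_sq_infDist {X : Type*} [MetricSpace X] {s : Set X} (hs : s.Nonempty) {p : X}
    {b : ℝ} (h : ∀ x ∈ s, b ≤ dist p x ^ 2) : b ≤ Metric.infDist p s ^ 2 :=
  (Real.sqrt_le_iff.1 <| (Metric.le_infDist hs).2 fun x hx =>
    Real.sqrt_le_iff.2 ⟨dist_nonneg, h x hx⟩).2

section Cupper

variable {m : ℕ} {lam : ℝ}

lemma norm_two_mul_smul_sub_sq (lam : ℝ) (y x : EuclideanSpace ℝ (Fin m)) :
    ‖(2 * lam) • y - x‖ ^ 2 = 4 * lam * (lam * ‖y‖ ^ 2 - inner ℝ y x) + ‖x‖ ^ 2 := by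
  rw [norm_sub_sq_real, norm_smul, real_inner_smul_left, Real.norm_eq_abs, mul_pow, sq_abs]
  ring

lemma Cupper_eq_div (hlam : 0 < lam) (y : EuclideanSpace ℝ (Fin m)) :
    Cupper lam y =
      (4 * lam * (lam * ‖y‖ ^ 2) - Metric.infDist ((2 * lam) • y) (unitSimplex m) ^ 2 + 1)
        / (4 * lam) := by
  rw [Cupper]
  field_simp

lemma apply_le_Cupper (hlam : 0 < lam) (y : EuclideanSpace ℝ (Fin m)) (j : Fin m) :
    y j ≤ Cupper lam y := by
  have hdist := Metric.infDist_le_dist_of_mem (x := (2 * lam) • y)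
    (single_one_mem_unitSimplex j)
  have hsq := pow_le_pow_left₀ Metric.infDist_nonneg hdist 2
  rw [dist_eq_norm, norm_two_mul_smul_sub_sq, EuclideanSpace.inner_single_right,
    PiLp.norm_single] at hsq
  rw [Cupper_eq_div hlam, le_div_iff₀ (by positivity)]
  norm_num at hsq
  linarith

lemma Cupper_le_of_forall_apply_le [Nonempty (Fin m)] (hlam : 0 < lam)
    {y : EuclideanSpace ℝ (Fin m)} {M : ℝ} (hy : ∀ i, y i ≤ M) :
    Cupper lam y ≤ M + 1 / (4 * lam) := by
  have hsq : 4 * lam * (lam * ‖y‖ ^ 2 - M) ≤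
      Metric.infDist ((2 * lam) • y) (unitSimplex m) ^ 2 := by
    refine le_sq_infDist unitSimplex_nonempty fun x hx => ?_
    rw [dist_eq_norm, norm_two_mul_smul_sub_sq]
    have := inner_le_of_mem_unitSimplex hy hx
    nlinarith [sq_nonneg ‖x‖]
  rw [Cupper_eq_div hlam, div_le_iff₀ (by positivity), add_mul,
    div_mul_cancel₀ _ (by positivity)]
  linarith

variable {K Q : ℕ} [Nonempty (Fin K)]

lemma max_iSup_le_Cupper [Nonempty (Fin Q)] (hlam : 0 < lam)
    (y : EuclideanSpace ℝ (Fin (K + Q))) :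
    max (⨆ k, y (Fin.castAdd Q k)) (⨆ q, y (Fin.natAdd K q)) ≤ Cupper lam y :=
  max_le (ciSup_le fun _ => apply_le_Cupper hlam y _)
    (ciSup_le fun _ => apply_le_Cupper hlam y _)

lemma Cupper_le_max_iSup_add (hlam : 0 < lam) (y : EuclideanSpace ℝ (Fin (K + Q))) :
    Cupper lam y ≤
      max (⨆ k, y (Fin.castAdd Q k)) (⨆ q, y (Fin.natAdd K q)) + 1 / (4 * lam) := by
  have : Nonempty (Fin (K + Q)) := ⟨Fin.castAdd Q (Classical.arbitrary _)⟩
  refine Cupper_le_of_forall_apply_le hlam fun i => Fin.addCases (fun k => ?_) (fun q => ?_) i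
  · exact le_max_of_le_left <|
      le_ciSup (f := fun k => y (Fin.castAdd Q k)) (Finite.bddAbove_range _) k
  · exact le_max_of_le_right <|
      le_ciSup (f := fun q => y (Fin.natAdd K q)) (Finite.bddAbove_range _) q

end Cupper

section hVec

variable {N K Q : ℕ} (h : Fin K → Fin N → ℂ) (α : Fin K → ℝ) (c : Fin Q → Fin N → ℂ)
  (σ : Fin Q → ℝ) (Ω : Fin N → ℝ) (t : ℝ)

@[simp]
lemma hVec_castAdd (k : Fin K) :
    hVec h α c σ Ω t (Fin.castAdd Q k) = fObj (α k) (h k) Ω - t := by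
  simp [hVec]

@[simp]
lemma hVec_natAdd (q : Fin Q) :
    hVec h α c σ Ω t (Fin.natAdd K q) = gObj (c q) Ω - σ q := by
  simp [hVec]

end hVec

lemma gObj_nonneg {N : ℕ} (c : Fin N → ℂ) (Ω : Fin N → ℝ) : 0 ≤ gObj c Ω := by
  unfold gObj
  positivity

lemma ciInf_le_ciInf_add {ι : Type*} [Nonempty ι] {f g : ι → ℝ} {a : ℝ}
    (hg : BddBelow (Set.range g)) (h : ∀ i, g i ≤ f i + a) :
    ⨅ i, g i ≤ (⨅ i, f i) + a := by
  have : (⨅ i, g i) - a ≤ ⨅ i, f i := le_ciInf fun i => by linarith [ciInf_le hg i, h i]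
  linarith

theorem stmt10_general {N K Q : ℕ} (hK : 0 < K) (hQ : 0 < Q)
    (h : Fin K → Fin N → ℂ) (α : Fin K → ℝ)
    (c : Fin Q → Fin N → ℂ) (σ : Fin Q → ℝ) (lam : ℝ) (hlam : 0 < lam) (t : ℝ) :
    (Flam h α c σ lam t < 0 → Ffun h α c σ t < 0) ∧
    (Flam h α c σ lam t > 1 / (4 * lam) → Ffun h α c σ t > 0) := by
  have : Nonempty (Fin K) := ⟨⟨0, hK⟩⟩
  have q₀ : Fin Q := ⟨0, hQ⟩
  have : Nonempty (Fin Q) := ⟨q₀⟩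
  set M : (Fin N → ℝ) → ℝ := fun Ω =>
    max (⨆ k, (fObj (α k) (h k) Ω - t)) (⨆ q, (gObj (c q) Ω - σ q))
  have hM_le : ∀ Ω, M Ω ≤ Cupper lam (hVec h α c σ Ω t) := fun Ω => by
    simpa only [hVec_castAdd, hVec_natAdd] using max_iSup_le_Cupper hlam (hVec h α c σ Ω t)
  have hle_M : ∀ Ω, Cupper lam (hVec h α c σ Ω t) ≤ M Ω + 1 / (4 * lam) := fun Ω => by
    simpa only [hVec_castAdd, hVec_natAdd] using Cupper_le_max_iSup_add hlam (hVec h α c σ Ω t)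
  have hM_bdd : BddBelow (Set.range M) := ⟨-σ q₀, Set.forall_mem_range.2 fun Ω =>
    le_max_of_le_right <| le_ciSup_of_le (Finite.bddAbove_range _) q₀ <| by
      linarith [gObj_nonneg (c q₀) Ω]⟩
  have hF_le : Ffun h α c σ t ≤ Flam h α c σ lam t := ciInf_mono hM_bdd hM_le
  have hle_F : Flam h α c σ lam t ≤ Ffun h α c σ t + 1 / (4 * lam) :=
    ciInf_le_ciInf_add (hM_bdd.range_mono _ hM_le) hle_M
  exact ⟨fun hneg => hF_le.trans_lt hneg, fun hpos => by linarith⟩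

/-- Sign transfer: if `F_λ(t) < 0` then `F(t) < 0`, and if `F_λ(t) > 1/(4λ)` then `F(t) > 0`. -/
theorem stmt10 {N K Q : ℕ} (hN : 0 < N) (hK : 0 < K) (hQ : 0 < Q)
    (h : Fin K → Fin N → ℂ) (α : Fin K → ℝ) (hα : ∀ k, 0 < α k)
    (c : Fin Q → Fin N → ℂ) (σ : Fin Q → ℝ) (lam : ℝ) (hlam : 0 < lam) (t : ℝ) :
    (Flam h α c σ lam t < 0 → Ffun h α c σ t < 0) ∧
    (Flam h α c σ lam t > 1 / (4 * lam) → Ffun h α c σ t > 0) :=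
  stmt10_general hK hQ h α c σ lam hlam t
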